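/- Let k be an algebraically closed field and R a commutative finitely generated k-algebra containing k. Let z ∈ R be a non-zero-divisor, b ∈ R a nilpotent element, l ≥ 1, and φ a k-algebra automorphism of R such that φ^l(r) − r ∈ bR for all r ∈ R, and such that for each 1 ≤ i ≤ l−1 the elements z and φ^i(z) generate the unit ideal of R. Then every simple left H(R, φ, z)-module M on which x acts locally nilpotently satisfies dim_k M = l. -/

import Mathlib

universe u
section GWADefs

variable (R : Type u) [Ring R] (φ : R ≃+* R) (z : R)

/-- The defining relations of the generalized Weyl algebra `H(R, φ, z)`, presented as a quotient
of the free `ℤ`-algebra on the underlying set of `R` together with two generators `x` (encoded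
as `Sum.inr 0`) and `y` (encoded as `Sum.inr 1`).  The first three families of relations encode
the ring structure of `R`; the remaining ones are the GWA relations
`yx = z`, `xy = φ⁻¹(z)`, `xr = φ⁻¹(r)x`, `yr = φ(r)y`. -/
inductive GWARel : FreeAlgebra ℤ (R ⊕ Fin 2) → FreeAlgebra ℤ (R ⊕ Fin 2) → Prop
  | add (r s : R) : GWARel
      (FreeAlgebra.ι ℤ (Sum.inl r) + FreeAlgebra.ι ℤ (Sum.inl s))
      (FreeAlgebra.ι ℤ (Sum.inl (r + s)))
  | mul (r s : R) : GWARel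
      (FreeAlgebra.ι ℤ (Sum.inl r) * FreeAlgebra.ι ℤ (Sum.inl s))
      (FreeAlgebra.ι ℤ (Sum.inl (r * s)))
  | one : GWARel (FreeAlgebra.ι ℤ (Sum.inl (1 : R))) 1
  | yx : GWARel (FreeAlgebra.ι ℤ (Sum.inr 1) * FreeAlgebra.ι ℤ (Sum.inr 0))
      (FreeAlgebra.ι ℤ (Sum.inl z))
  | xy : GWARel (FreeAlgebra.ι ℤ (Sum.inr 0) * FreeAlgebra.ι ℤ (Sum.inr 1))
      (FreeAlgebra.ι ℤ (Sum.inl (φ.symm z)))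
  | xr (r : R) : GWARel (FreeAlgebra.ι ℤ (Sum.inr 0) * FreeAlgebra.ι ℤ (Sum.inl r))
      (FreeAlgebra.ι ℤ (Sum.inl (φ.symm r)) * FreeAlgebra.ι ℤ (Sum.inr 0))
  | yr (r : R) : GWARel (FreeAlgebra.ι ℤ (Sum.inr 1) * FreeAlgebra.ι ℤ (Sum.inl r))
      (FreeAlgebra.ι ℤ (Sum.inl (φ r)) * FreeAlgebra.ι ℤ (Sum.inr 1))

/-- The generalized Weyl algebra `H(R, φ, z)`. -/
abbrev GWA : Type u := RingQuot (GWARel R φ z)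

/-- The generator `x` of the generalized Weyl algebra. -/
noncomputable def GWA.X : GWA R φ z :=
  RingQuot.mkRingHom (GWARel R φ z) (FreeAlgebra.ι ℤ (Sum.inr 0))

/-- The generator `y` of the generalized Weyl algebra. -/
noncomputable def GWA.Y : GWA R φ z :=
  RingQuot.mkRingHom (GWARel R φ z) (FreeAlgebra.ι ℤ (Sum.inr 1))

/-- The canonical ring homomorphism `R → H(R, φ, z)`. -/
noncomputable def GWA.ofBase : R →+* GWA R φ z where
  toFun r := RingQuot.mkRingHom (GWARel R φ z) (FreeAlgebra.ι ℤ (Sum.inl r))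
  map_one' := by
    have := RingQuot.mkRingHom_rel (GWARel.one (R := R) (φ := φ) (z := z))
    simpa using this
  map_mul' r s := by
    have := RingQuot.mkRingHom_rel (GWARel.mul (φ := φ) (z := z) r s)
    simp only [map_mul] at this
    exact this.symm
  map_zero' := by
    have := RingQuot.mkRingHom_rel (GWARel.add (φ := φ) (z := z) 0 0)
    simp only [map_add, add_zero] at this
    exact add_eq_left.mp this
  map_add' r s := by
    have := RingQuot.mkRingHom_rel (GWARel.add (φ := φ) (z := z) r s)
    simp only [map_add] at this
    exact this.symm

end GWADefs

section GWALemmas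
variable {R : Type u} [Ring R] (φ : R ≃+* R) (z : R)

namespace GWA

lemma X_mul_ofBase (r : R) :
    X R φ z * ofBase R φ z r = ofBase R φ z (φ.symm r) * X R φ z := by
  have := RingQuot.mkRingHom_rel (GWARel.xr (R := R) (φ := φ) (z := z) r)
  rw [map_mul, map_mul] at this; exact this

lemma Y_mul_ofBase (r : R) :
    Y R φ z * ofBase R φ z r = ofBase R φ z (φ r) * Y R φ z := by
  have := RingQuot.mkRingHom_rel (GWARel.yr (R := R) (φ := φ) (z := z) r)
  rw [map_mul, map_mul] at this; exact this

lemma Y_mul_X : Y R φ z * X R φ z = ofBase R φ z z := by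
  have := RingQuot.mkRingHom_rel (GWARel.yx (R := R) (φ := φ) (z := z))
  rw [map_mul] at this; exact this

lemma X_mul_Y : X R φ z * Y R φ z = ofBase R φ z (φ.symm z) := by
  have := RingQuot.mkRingHom_rel (GWARel.xy (R := R) (φ := φ) (z := z))
  rw [map_mul] at this; exact this

lemma mem_subring (S : Subring (GWA R φ z)) (hR : ∀ r, ofBase R φ z r ∈ S)
    (hX : X R φ z ∈ S) (hY : Y R φ z ∈ S) (a : GWA R φ z) : a ∈ S := by
  obtain ⟨f, rfl⟩ := RingQuot.mkRingHom_surjective (GWARel R φ z) a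
  induction f using FreeAlgebra.induction with
  | grade0 n =>
      rw [show (algebraMap ℤ (FreeAlgebra ℤ (R ⊕ Fin 2)) n) = ((n : ℤ) : FreeAlgebra ℤ (R ⊕ Fin 2)) from by
        simp [algebraMap_int_eq, eq_intCast]]
      rw [map_intCast]
      exact intCast_mem S n
  | grade1 x =>
      obtain (r | i) := x
      · exact hR r
      · fin_cases i
        · exact hX
        · exact hY
  | mul a b ha hb => rw [map_mul]; exact S.mul_mem ha hb
  | add a b ha hb => rw [map_add]; exact S.add_mem ha hb

lemma smul_mem_addSubgroup {M : Type u} [AddCommGroup M] [Module (GWA R φ z) M]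
    (p : AddSubgroup M)
    (hR : ∀ (r : R), ∀ v ∈ p, ofBase R φ z r • v ∈ p)
    (hX : ∀ v ∈ p, X R φ z • v ∈ p) (hY : ∀ v ∈ p, Y R φ z • v ∈ p) :
    ∀ (a : GWA R φ z), ∀ v ∈ p, a • v ∈ p := by
  intro a
  let S : Subring (GWA R φ z) :=
  { carrier := {a | ∀ v ∈ p, a • v ∈ p}
    one_mem' := fun v hv => by simpa using hv
    mul_mem' := fun {a b} ha hb v hv => by rw [mul_smul]; exact ha _ (hb _ hv)
    add_mem' := fun {a b} ha hb v hv => by rw [add_smul]; exact p.add_mem (ha _ hv) (hb _ hv)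
    zero_mem' := fun v hv => by simpa using p.zero_mem
    neg_mem' := fun {a} ha v hv => by rw [neg_smul]; exact p.neg_mem (ha _ hv) }
  exact mem_subring φ z S hR hX hY a

end GWA
end GWALemmas

section GWAPow
variable {k R : Type u} [CommSemiring k] [CommRing R] [Algebra k R] (φ : R ≃ₐ[k] R) (z : R)

namespace GWA

lemma pow_apply_symm_pow (i : ℕ) (r : R) : (φ ^ i) ((φ.symm ^ i) r) = r := by
  induction i generalizing r with
  | zero => simp
  | succ n ih =>
      rw [pow_succ' φ, pow_succ φ.symm, AlgEquiv.mul_apply, AlgEquiv.mul_apply, ih,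
        AlgEquiv.apply_symm_apply]

lemma symm_pow_apply_pow (i : ℕ) (r : R) : (φ.symm ^ i) ((φ ^ i) r) = r := by
  simpa using pow_apply_symm_pow φ.symm i r

lemma Y_pow_mul_ofBase (i : ℕ) (r : R) :
    Y R ↑φ z ^ i * ofBase R ↑φ z r = ofBase R ↑φ z ((φ ^ i) r) * Y R ↑φ z ^ i := by
  induction i generalizing r with
  | zero => simp
  | succ n ih =>
      rw [pow_succ, mul_assoc, Y_mul_ofBase, ← mul_assoc,
        show ((↑φ : R ≃+* R) r) = φ r from rfl, ih (φ r), mul_assoc, ← pow_succ,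
        pow_succ φ, AlgEquiv.mul_apply]

lemma ofBase_mul_Y_pow (i : ℕ) (r : R) :
    ofBase R ↑φ z r * Y R ↑φ z ^ i = Y R ↑φ z ^ i * ofBase R ↑φ z ((φ.symm ^ i) r) := by
  rw [Y_pow_mul_ofBase φ z i ((φ.symm ^ i) r), pow_apply_symm_pow]

lemma X_mul_Y_pow_succ (i : ℕ) :
    X R ↑φ z * Y R ↑φ z ^ (i + 1) = Y R ↑φ z ^ i * ofBase R ↑φ z ((φ.symm ^ (i + 1)) z) := by
  rw [pow_succ' (Y R ↑φ z), ← mul_assoc, X_mul_Y, show (↑φ : R ≃+* R).symm z = φ.symm z from rfl,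
    ofBase_mul_Y_pow φ z i (φ.symm z), pow_succ φ.symm, AlgEquiv.mul_apply]

/-- The product `φ⁻¹(z) φ⁻²(z) ⋯ φ⁻ⁱ(z)`. -/
def cc : ℕ → R
  | 0 => 1
  | i + 1 => cc i * (φ.symm ^ (i + 1)) z

lemma X_pow_mul_Y_pow (i : ℕ) :
    X R ↑φ z ^ i * Y R ↑φ z ^ i = ofBase R ↑φ z (cc φ z i) := by
  induction i with
  | zero => simp [cc]
  | succ n ih =>
      rw [pow_succ (X R ↑φ z), mul_assoc, X_mul_Y_pow_succ, ← mul_assoc, ih, ← map_mul]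
      rfl

end GWA
end GWAPow
theorem simple_module_dim_one (k A V : Type u) [Field k] [IsAlgClosed k] [CommRing A]
    [Algebra k A] [Algebra.FiniteType k A] [AddCommGroup V] [Module A V]
    [IsSimpleModule A V] (v w : V) (hv : v ≠ 0) :
    ∃ c : k, w = algebraMap k A c • v := by
  have hmax : (Module.annihilator A V).IsMaximal := IsSimpleModule.annihilator_isMaximal
  set I := Module.annihilator A V with hI
  letI : Field (A ⧸ I) := Ideal.Quotient.field I
  haveI hft : Algebra.FiniteType k (A ⧸ I) :=
    Algebra.FiniteType.of_surjective (Ideal.Quotient.mkₐ k I)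
      (Ideal.Quotient.mkₐ_surjective k I)
  haveI : Algebra.IsIntegral k (A ⧸ I) := by
    obtain ⟨n, f, hf⟩ := Algebra.FiniteType.iff_quotient_mvPolynomial''.mp hft
    have hint := MvPolynomial.comp_C_integral_of_surjective_of_isJacobsonRing f.toRingHom hf
    have heq : f.toRingHom.comp MvPolynomial.C = algebraMap k (A ⧸ I) := by
      ext c
      simpa using f.commutes c
    rw [heq] at hint
    exact Algebra.isIntegral_def.mpr hint
  have hsurj : Function.Surjective (algebraMap k (A ⧸ I)) :=
    IsAlgClosed.algebraMap_bijective_of_isIntegral.2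
  have hsp : (Submodule.span A {v} : Submodule A V) = ⊤ := by
    rcases eq_bot_or_eq_top (Submodule.span A {v}) with h | h
    · exact absurd (h ▸ Submodule.mem_span_singleton_self v) (by simpa using hv)
    · exact h
  obtain ⟨a, ha⟩ : ∃ a : A, a • v = w :=
    Submodule.mem_span_singleton.mp (hsp ▸ Submodule.mem_top)
  obtain ⟨c, hc⟩ := hsurj (Ideal.Quotient.mk I a)
  refine ⟨c, ?_⟩
  have hmem : a - algebraMap k A c ∈ I := by
    have : Ideal.Quotient.mk I (algebraMap k A c) = algebraMap k (A ⧸ I) c := by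
      rw [IsScalarTower.algebraMap_apply k A (A ⧸ I), Ideal.Quotient.algebraMap_eq]
    rw [← Ideal.Quotient.eq_zero_iff_mem, map_sub, this, hc, sub_self]
  have h0 : (a - algebraMap k A c) • v = 0 := by
    have := Module.mem_annihilator.mp (hI ▸ hmem)
    exact this v
  rw [sub_smul, sub_eq_zero] at h0
  rw [← ha, h0]

section Main

open GWA

theorem gwa_dim {k R : Type u} [Field k] [IsAlgClosed k]
    [CommRing R] [Algebra k R] [Algebra.FiniteType k R]
    (z b : R) (hb : IsNilpotent b)
    (l : ℕ) (hl : 1 ≤ l) (φ : R ≃ₐ[k] R)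
    (hφl : ∀ r : R, ∃ s : R, (φ ^ l) r - r = b * s)
    (hcop : ∀ i : ℕ, 1 ≤ i → i ≤ l - 1 → Ideal.span {z, (φ ^ i) z} = ⊤)
    (M : Type u) [AddCommGroup M] [Module (GWA R (φ : R ≃+* R) z) M]
    [IsSimpleModule (GWA R (φ : R ≃+* R) z) M]
    (hM : ∀ m : M, ∃ n : ℕ, (GWA.X R (φ : R ≃+* R) z) ^ n • m = 0)
    [Module k M]
    (hcomp : ∀ (c : k) (v : M),
      c • v = GWA.ofBase R (φ : R ≃+* R) z (algebraMap k R c) • v) :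
    Module.finrank k M = l := by
  classical
  letI instR : Module R M := Module.compHom M (GWA.ofBase R (φ : R ≃+* R) z)
  set XX := GWA.X R (φ : R ≃+* R) z with hXX
  set YY := GWA.Y R (φ : R ≃+* R) z with hYY
  set oB := GWA.ofBase R (φ : R ≃+* R) z with hoB
  have hsmul : ∀ (r : R) (v : M), r • v = oB r • v := fun _ _ => rfl
  have hsymm : ∀ r : R, (φ : R ≃+* R).symm r = φ.symm r := fun _ => rfl
  -- noetherian
  haveI : IsNoetherianRing R := Algebra.FiniteType.isNoetherianRing k R
  haveI : Nontrivial M := IsSimpleModule.nontrivial (GWA R (φ : R ≃+* R) z) M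
  -- the kernel of x
  let N : Submodule R M :=
  { carrier := {v | XX • v = 0}
    add_mem' := fun {a b} (ha : XX • a = 0) (hb : XX • b = 0) => by
      show XX • (a + b) = 0
      rw [smul_add, ha, hb, add_zero]
    zero_mem' := smul_zero _
    smul_mem' := fun r v (hv : XX • v = 0) => by
      show XX • (r • v) = 0
      rw [hsmul, ← mul_smul, GWA.X_mul_ofBase, mul_smul, hv, smul_zero] }
  have hmemN : ∀ v : M, v ∈ N ↔ XX • v = 0 := fun _ => Iff.rfl
  -- N is nontrivial
  obtain ⟨m₀, hm₀⟩ := exists_ne (0 : M)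
  have hex : ∃ n : ℕ, XX ^ n • m₀ = 0 := hM m₀
  have hnf0 : Nat.find hex ≠ 0 := by
    intro h
    have := Nat.find_spec hex
    rw [h, pow_zero, one_smul] at this
    exact hm₀ this
  have hv0 : XX ^ (Nat.find hex - 1) • m₀ ≠ 0 :=
    Nat.find_min hex (Nat.sub_lt (Nat.pos_of_ne_zero hnf0) one_pos)
  have hvN : XX • (XX ^ (Nat.find hex - 1) • m₀) = 0 := by
    rw [← mul_smul, ← pow_succ', show Nat.find hex - 1 + 1 = Nat.find hex by omega]
    exact Nat.find_spec hex
  haveI : Nontrivial ↥N := by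
    refine ⟨⟨XX ^ (Nat.find hex - 1) • m₀, hvN⟩, 0, fun hq => hv0 ?_⟩
    exact congrArg Subtype.val hq
  -- associated prime
  obtain ⟨𝔭, hAP⟩ := associatedPrimes.nonempty R ↥N
  obtain ⟨hprime, x0, hx0⟩ := isAssociatedPrime_iff.mp hAP
  set m : M := (x0 : M) with hmdef
  have hxm : XX • m = 0 := x0.2
  have hann : ∀ r : R, r ∈ 𝔭 ↔ oB r • m = 0 := by
    intro r
    rw [hx0, Submodule.mem_colon_singleton, Submodule.mem_bot]
    constructor
    · intro h
      have : ((r • x0 : ↥N) : M) = 0 := by rw [h]; rfl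
      rw [← hsmul]
      exact this
    · intro h
      apply Subtype.ext
      show ((r • x0 : ↥N) : M) = 0
      rw [show ((r • x0 : ↥N) : M) = r • (x0 : M) from rfl, hsmul]
      exact h
  have hm0 : m ≠ 0 := by
    intro h
    exact hprime.ne_top ((Ideal.eq_top_iff_one 𝔭).mpr ((hann 1).mpr (by rw [map_one, one_smul, h])))
  -- ideal facts
  have hz𝔭 : z ∈ 𝔭 := by
    rw [hann]
    rw [show oB z = YY * XX from (GWA.Y_mul_X (φ : R ≃+* R) z).symm, mul_smul, hxm, smul_zero]
  have hb𝔭 : b ∈ 𝔭 := by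
    obtain ⟨n, hbn⟩ := hb
    exact hprime.mem_of_pow_mem n (by rw [hbn]; exact Ideal.zero_mem 𝔭)
  have hstab : ∀ r : R, r ∈ 𝔭 → (φ ^ l) r ∈ 𝔭 := by
    intro r hr
    obtain ⟨s, hs⟩ := hφl r
    have : (φ ^ l) r = r + b * s := by linear_combination hs
    rw [this]
    exact Ideal.add_mem _ hr (Ideal.mul_mem_right _ _ hb𝔭)
  have hstab' : ∀ r : R, (φ ^ l) r ∈ 𝔭 → r ∈ 𝔭 := by
    intro r hr
    obtain ⟨s, hs⟩ := hφl r
    have : r = (φ ^ l) r - b * s := by linear_combination -hs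
    rw [this]
    exact Ideal.sub_mem _ hr (Ideal.mul_mem_right _ _ hb𝔭)
  have hsymmstab : ∀ r : R, r ∈ 𝔭 → (φ.symm ^ l) r ∈ 𝔭 := by
    intro r hr
    apply hstab'
    rw [GWA.pow_apply_symm_pow]
    exact hr
  have hsymmiter : ∀ (j : ℕ) (r : R), r ∈ 𝔭 → (φ.symm ^ (l * j)) r ∈ 𝔭 := by
    intro j
    induction j with
    | zero => intro r hr; simpa using hr
    | succ n ih =>
        intro r hr
        rw [Nat.mul_succ, pow_add, AlgEquiv.mul_apply]
        exact ih _ (hsymmstab r hr)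
  have hJmem : ∀ (i : ℕ) (u : R), (φ.symm ^ (i % l)) u ∈ 𝔭 → (φ.symm ^ i) u ∈ 𝔭 := by
    intro i u hu
    rw [show i = l * (i / l) + i % l from (Nat.div_add_mod i l).symm, pow_add,
      AlgEquiv.mul_apply]
    exact hsymmiter _ _ hu
  have hznot : ∀ j : ℕ, 1 ≤ j → j ≤ l - 1 → (φ.symm ^ j) z ∉ 𝔭 := by
    intro j hj1 hj2 hmem
    have h1 : (φ ^ l) ((φ.symm ^ j) z) ∈ 𝔭 := hstab _ hmem
    have h2 : (φ ^ l) ((φ.symm ^ j) z) = (φ ^ (l - j)) z := by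
      conv_lhs => rw [show l = (l - j) + j by omega]
      rw [pow_add, AlgEquiv.mul_apply, GWA.pow_apply_symm_pow]
    rw [h2] at h1
    have hcop' := hcop (l - j) (by omega) (by omega)
    apply hprime.ne_top
    rw [Ideal.eq_top_iff_one]
    have hle : Ideal.span {z, (φ ^ (l - j)) z} ≤ 𝔭 := Ideal.span_le.mpr (by
      intro w hw
      rcases hw with rfl | hw
      · exact hz𝔭
      · rcases hw with rfl
        exact h1)
    exact hle (by rw [hcop']; exact Submodule.mem_top)
  have hcc : ∀ s : ℕ, s ≤ l - 1 → GWA.cc φ z s ∉ 𝔭 := by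
    intro s
    induction s with
    | zero =>
        intro _ h
        exact hprime.ne_top ((Ideal.eq_top_iff_one 𝔭).mpr h)
    | succ n ih =>
        intro hn hmem
        rcases hprime.mem_or_mem hmem with h | h
        · exact ih (by omega) h
        · exact hznot (n + 1) (by omega) hn h
  -- the translated ideals J t
  set J : ℕ → Ideal R := fun t => 𝔭.comap ((φ.symm ^ t : R ≃ₐ[k] R) : R →+* R) with hJdef
  have hJ : ∀ (t : ℕ) (u : R), u ∈ J t ↔ (φ.symm ^ t) u ∈ 𝔭 := fun _ _ => Iff.rfl
  have hJz : ∀ t : ℕ, (φ ^ t) z ∈ J t := by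
    intro t
    rw [hJ, GWA.symm_pow_apply_pow]
    exact hz𝔭
  have hJcomax : ∀ s t : ℕ, s < t → t ≤ l - 1 → (1 : R) ∈ J s ⊔ J t := by
    intro s t hst htl
    have hcop' := hcop (t - s) (by omega) (by omega)
    have h1 : (1 : R) ∈ Ideal.span {z, (φ ^ (t - s)) z} := by
      rw [hcop']; exact Submodule.mem_top
    obtain ⟨uu, vv, huv⟩ := Ideal.mem_span_pair.mp h1
    have happ : (φ ^ s) uu * (φ ^ s) z + (φ ^ s) vv * (φ ^ t) z = 1 := by
      have := congrArg (φ ^ s) huv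
      rw [map_add, map_mul, map_mul, map_one] at this
      rw [← this]
      congr 1
      rw [← AlgEquiv.mul_apply, ← pow_add, show s + (t - s) = t by omega]
    refine Submodule.mem_sup.mpr ⟨(φ ^ s) uu * (φ ^ s) z, ?_, (φ ^ s) vv * (φ ^ t) z, ?_, happ⟩
    · exact Ideal.mul_mem_left _ _ (hJz s)
    · exact Ideal.mul_mem_left _ _ (hJz t)
  have hcrtF : ∀ (s : ℕ), s ≤ l - 1 → ∀ (F : Finset ℕ), (∀ t ∈ F, t ≤ l - 1 ∧ t ≠ s) →
      ∃ u : R, 1 - u ∈ J s ∧ ∀ t ∈ F, u ∈ J t := by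
    intro s hs F
    induction F using Finset.induction_on with
    | empty =>
        intro _
        exact ⟨1, by simpa using (J s).zero_mem, fun t ht => absurd ht (by simp)⟩
    | @insert t F' hnot ih =>
        intro hF
        obtain ⟨u, hu1, hu2⟩ := ih (fun t' ht' => hF t' (Finset.mem_insert_of_mem ht'))
        obtain ⟨ht1, ht2⟩ := hF t (Finset.mem_insert_self t F')
        have h1 : (1 : R) ∈ J s ⊔ J t := by
          rcases Nat.lt_or_ge s t with h | h
          · exact hJcomax s t h ht1
          · have hts : t < s := by omega
            rw [sup_comm]
            exact hJcomax t s hts hs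
        obtain ⟨a, haJ, bb, hbJ, hab⟩ := Submodule.mem_sup.mp h1
        refine ⟨u * bb, ?_, ?_⟩
        · have heq : 1 - u * bb = (1 - u) + u * a := by linear_combination (-u) * hab
          rw [heq]
          exact Ideal.add_mem _ hu1 (Ideal.mul_mem_left _ _ haJ)
        · intro t' ht'
          rcases Finset.mem_insert.mp ht' with rfl | ht'
          · exact Ideal.mul_mem_left _ _ hbJ
          · exact Ideal.mul_mem_right _ _ (hu2 t' ht')
  have hcrt : ∀ s : ℕ, s ≤ l - 1 →
      ∃ u : R, 1 - u ∈ J s ∧ ∀ t : ℕ, t ≤ l - 1 → t ≠ s → u ∈ J t := by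
    intro s hs
    obtain ⟨u, hu1, hu2⟩ := hcrtF s hs ((Finset.range l).erase s) (by
      intro t ht
      rw [Finset.mem_erase, Finset.mem_range] at ht
      exact ⟨by omega, ht.1⟩)
    refine ⟨u, hu1, fun t htl hts => hu2 t ?_⟩
    rw [Finset.mem_erase, Finset.mem_range]
    exact ⟨hts, by omega⟩
  -- spanning : a nonzero x-killed vector generates via Y-powers
  have hspan : ∀ w : M, w ≠ 0 → XX • w = 0 →
      ∀ v : M, v ∈ Submodule.span R (Set.range fun i : ℕ => (YY ^ i) • w) := by
    intro w hw0 hxw v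
    set S := Submodule.span R (Set.range fun i : ℕ => (YY ^ i) • w) with hS
    have hgen : ∀ i : ℕ, (YY ^ i) • w ∈ S := fun i =>
      Submodule.subset_span ⟨i, rfl⟩
    have hRcl : ∀ (r : R), ∀ u ∈ S, oB r • u ∈ S := by
      intro r u hu
      rw [← hsmul]
      exact S.smul_mem r hu
    have hYcl : ∀ u ∈ S, YY • u ∈ S := by
      intro u hu
      induction hu using Submodule.span_induction with
      | mem x hx =>
          obtain ⟨i, rfl⟩ := hx
          rw [← mul_smul, ← pow_succ']
          exact hgen (i + 1)
      | zero => rw [smul_zero]; exact S.zero_mem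
      | add x y _ _ hx hy => rw [smul_add]; exact S.add_mem hx hy
      | smul r x _ hx =>
          rw [hsmul, ← mul_smul, GWA.Y_mul_ofBase, mul_smul]
          exact hRcl _ _ hx
    have hXcl : ∀ u ∈ S, XX • u ∈ S := by
      intro u hu
      induction hu using Submodule.span_induction with
      | mem x hx =>
          obtain ⟨i, rfl⟩ := hx
          cases i with
          | zero =>
              simp only [pow_zero, one_smul, hxw]
              exact S.zero_mem
          | succ n =>
              rw [← mul_smul, GWA.X_mul_Y_pow_succ, GWA.Y_pow_mul_ofBase, mul_smul, ← hsmul]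
              exact S.smul_mem _ (hgen n)
      | zero => rw [smul_zero]; exact S.zero_mem
      | add x y _ _ hx hy => rw [smul_add]; exact S.add_mem hx hy
      | smul r x _ hx =>
          rw [hsmul, ← mul_smul, GWA.X_mul_ofBase, mul_smul]
          exact hRcl _ _ hx
    let Sm : Submodule (GWA R (φ : R ≃+* R) z) M :=
    { carrier := (S : Set M)
      add_mem' := fun {a b} ha hb => S.add_mem ha hb
      zero_mem' := S.zero_mem
      smul_mem' := fun h {x} hx =>
        GWA.smul_mem_addSubgroup (φ : R ≃+* R) z S.toAddSubgroup hRcl hXcl hYcl h x hx }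
    have hSm : Sm = ⊤ := by
      rcases eq_bot_or_eq_top Sm with h | h
      · exfalso
        apply hw0
        have hwS : w ∈ Sm := by
          show w ∈ S
          have := hgen 0
          rwa [pow_zero, one_smul] at this
        rw [h] at hwS
        simpa using hwS
      · exact h
    show v ∈ Sm
    rw [hSm]
    trivial
  -- the zero-weight space
  set gen : ℕ → M := fun j => (YY ^ (l * j)) • m with hgen_def
  set M₀ : Submodule R M := Submodule.span R (Set.range gen) with hM₀def
  have hgenM₀ : ∀ j : ℕ, gen j ∈ M₀ := fun j => Submodule.subset_span ⟨j, rfl⟩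
  have hmM₀ : m ∈ M₀ := by
    have h0 : gen 0 = m := by
      show (YY ^ (l * 0)) • m = m
      rw [Nat.mul_zero, pow_zero, one_smul]
    have := hgenM₀ 0
    rwa [h0] at this
  have hM₀kill : ∀ v ∈ M₀, ∀ r ∈ 𝔭, oB r • v = 0 := by
    intro v hv r hr
    let K : Submodule R M :=
    { carrier := {u | oB r • u = 0}
      add_mem' := fun {a c} (ha : oB r • a = 0) (hc : oB r • c = 0) => by
        show oB r • (a + c) = 0
        rw [smul_add, ha, hc, add_zero]
      zero_mem' := smul_zero _
      smul_mem' := fun r' u (hu : oB r • u = 0) => by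
        show oB r • (r' • u) = 0
        rw [hsmul, ← mul_smul, ← map_mul, mul_comm r r', map_mul, mul_smul, hu, smul_zero] }
    have : v ∈ K := by
      apply Submodule.span_le.mpr _ hv
      rintro x ⟨j, rfl⟩
      show oB r • (YY ^ (l * j)) • m = 0
      rw [← mul_smul, GWA.ofBase_mul_Y_pow, mul_smul, (hann _).mp (hsymmiter j r hr),
        smul_zero]
    exact this
  have hXM₀ : ∀ v ∈ M₀, XX • v = 0 := by
    intro v hv
    let K : Submodule R M :=
    { carrier := {u | XX • u = 0}
      add_mem' := fun {a c} (ha : XX • a = 0) (hc : XX • c = 0) => by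
        show XX • (a + c) = 0
        rw [smul_add, ha, hc, add_zero]
      zero_mem' := smul_zero _
      smul_mem' := fun r' u (hu : XX • u = 0) => by
        show XX • (r' • u) = 0
        rw [hsmul, ← mul_smul, GWA.X_mul_ofBase, mul_smul, hu, smul_zero] }
    have : v ∈ K := by
      apply Submodule.span_le.mpr _ hv
      rintro x ⟨j, rfl⟩
      show XX • (YY ^ (l * j)) • m = 0
      cases hlj : l * j with
      | zero =>
          rw [pow_zero, one_smul, hxm]
      | succ n =>
          rw [← mul_smul, GWA.X_mul_Y_pow_succ, mul_smul, ← hlj,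
            (hann _).mp (hsymmiter j z hz𝔭), smul_zero]
    exact this
  have hTM₀ : ∀ v ∈ M₀, (YY ^ l) • v ∈ M₀ := by
    intro v hv
    induction hv using Submodule.span_induction with
    | mem x hx =>
        obtain ⟨j, rfl⟩ := hx
        show (YY ^ l) • (YY ^ (l * j)) • m ∈ M₀
        rw [← mul_smul, ← pow_add, show l + l * j = l * (j + 1) by ring]
        exact hgenM₀ (j + 1)
    | zero => rw [smul_zero]; exact M₀.zero_mem
    | add x y _ _ hx hy => rw [smul_add]; exact M₀.add_mem hx hy
    | smul r x _ hx =>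
        rw [hsmul, ← mul_smul, GWA.Y_pow_mul_ofBase, mul_smul, ← hsmul]
        exact M₀.smul_mem _ hx
  -- key containment lemma
  have hkey : ∀ (W : Submodule R M), W ≤ M₀ → (∀ v ∈ W, (YY ^ l) • v ∈ W) →
      (∃ w ∈ W, w ≠ 0) → ∀ j : ℕ, gen j ∈ W := by
    intro W hWM₀ hWT hWne
    obtain ⟨w, hwW, hw0⟩ := hWne
    have hWiter : ∀ (jj : ℕ) (v : M), v ∈ W → (YY ^ (l * jj)) • v ∈ W := by
      intro jj
      induction jj with
      | zero => intro v hv; rwa [Nat.mul_zero, pow_zero, one_smul]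
      | succ n ih =>
          intro v hv
          rw [Nat.mul_succ, pow_add, mul_smul]
          exact ih _ (hWT v hv)
    have hxw : XX • w = 0 := hXM₀ w (hWM₀ hwW)
    have hmmem := hspan w hw0 hxw m
    obtain ⟨u, hu1, hu2⟩ := hcrt 0 (by omega)
    -- the projection step
    have hproj : ∀ v ∈ Submodule.span R (Set.range fun i : ℕ => (YY ^ i) • w),
        oB u • v ∈ W := by
      intro v hv
      induction hv using Submodule.span_induction with
      | mem x hx =>
          obtain ⟨i, rfl⟩ := hx
          show oB u • (YY ^ i) • w ∈ W
          rw [← mul_smul, GWA.ofBase_mul_Y_pow, mul_smul]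
          by_cases hs : i % l = 0
          · have hidecomp : i = l * (i / l) := by
              have := Nat.div_add_mod i l
              omega
            rw [← hsmul]
            rw [hidecomp]
            exact hWiter (i / l) _ (W.smul_mem _ hwW)
          · have hzero : oB ((φ.symm ^ i) u) • w = 0 := by
              apply hM₀kill w (hWM₀ hwW)
              apply hJmem
              have hlt : i % l < l := Nat.mod_lt _ (by omega)
              exact hu2 (i % l) (by omega) hs
            rw [hzero, smul_zero]
            exact W.zero_mem
      | zero => rw [smul_zero]; exact W.zero_mem
      | add x y _ _ hx hy => rw [smul_add]; exact W.add_mem hx hy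
      | smul r x _ hx =>
          rw [hsmul, ← mul_smul, ← map_mul, mul_comm u r, map_mul, mul_smul, ← hsmul]
          exact W.smul_mem _ hx
    have hmW : m ∈ W := by
      have h1 : oB (1 - u) • m = 0 := (hann _).mp hu1
      have h2 : oB u • m ∈ W := hproj m hmmem
      have h3 : oB u • m = m := by
        have : oB u • m + oB (1 - u) • m = m := by
          rw [← add_smul, ← map_add, show u + (1 - u) = 1 by ring, map_one, one_smul]
        rw [h1, add_zero] at this
        exact this
      rwa [h3] at h2
    intro j
    exact hWiter j m hmW
  -- T as an R-linear endomorphism of M₀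
  let Tl : ↥M₀ →ₗ[R] ↥M₀ :=
  { toFun := fun v => ⟨(YY ^ l) • (v : M), hTM₀ _ v.2⟩
    map_add' := by
      intro a c
      apply Subtype.ext
      show (YY ^ l) • ((a : M) + c) = (YY ^ l) • (a : M) + (YY ^ l) • (c : M)
      rw [smul_add]
    map_smul' := by
      intro r v
      apply Subtype.ext
      show (YY ^ l) • (r • (v : M)) = r • ((YY ^ l) • (v : M))
      rw [hsmul, ← mul_smul, GWA.Y_pow_mul_ofBase, mul_smul, ← hsmul]
      have hdiff : ((φ ^ l) r - r) • ((YY ^ l) • (v : M)) = 0 := by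
        rw [hsmul]
        apply hM₀kill _ (hTM₀ _ v.2)
        obtain ⟨s, hsx⟩ := hφl r
        rw [hsx]
        exact Ideal.mul_mem_right _ _ hb𝔭
      rw [sub_smul, sub_eq_zero] at hdiff
      exact hdiff }
  have hTlcoe : ∀ v : ↥M₀, (Tl v : M) = (YY ^ l) • (v : M) := fun _ => rfl
  letI instP : Module (Polynomial R) ↥M₀ := Module.compHom _ (Polynomial.aeval Tl).toRingHom
  have hPsmul : ∀ (f : Polynomial R) (v : ↥M₀), f • v = Polynomial.aeval Tl f v :=
    fun _ _ => rfl
  haveI : Nontrivial ↥M₀ := ⟨⟨⟨m, hmM₀⟩, 0, fun h => hm0 (congrArg Subtype.val h)⟩⟩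
  haveI : Nontrivial (Submodule (Polynomial R) ↥M₀) := by
    refine ⟨⊥, ⊤, fun h => ?_⟩
    obtain ⟨a, c, hac⟩ := exists_pair_ne ↥M₀
    apply hac
    have ha : a ∈ (⊥ : Submodule (Polynomial R) ↥M₀) := by rw [h]; trivial
    have hc : c ∈ (⊥ : Submodule (Polynomial R) ↥M₀) := by rw [h]; trivial
    rw [Submodule.mem_bot] at ha hc
    rw [ha, hc]
  haveI hsimp : IsSimpleModule (Polynomial R) ↥M₀ := by
    refine { toNontrivial := inferInstance, eq_bot_or_eq_top := ?_ }
    intro W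
    rcases eq_or_ne W ⊥ with h | h
    · left; exact h
    · right
      let W' : Submodule R M :=
      { carrier := (fun v : ↥M₀ => (v : M)) '' (W : Set ↥M₀)
        add_mem' := by
          rintro a c ⟨a', ha', rfl⟩ ⟨c', hc', rfl⟩
          exact ⟨a' + c', W.add_mem ha' hc', rfl⟩
        zero_mem' := ⟨0, W.zero_mem, rfl⟩
        smul_mem' := by
          rintro r x ⟨a, ha, rfl⟩
          refine ⟨Polynomial.C r • a, W.smul_mem _ ha, ?_⟩
          show ((Polynomial.C r • a : ↥M₀) : M) = r • (a : M)
          rw [hPsmul, Polynomial.aeval_C, Module.algebraMap_end_apply]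
          rfl }
      have hW'le : W' ≤ M₀ := by
        rintro x ⟨a, _, rfl⟩
        exact a.2
      have hW'T : ∀ v ∈ W', (YY ^ l) • v ∈ W' := by
        rintro x ⟨a, ha, rfl⟩
        refine ⟨Polynomial.X • a, W.smul_mem _ ha, ?_⟩
        show ((Polynomial.X • a : ↥M₀) : M) = (YY ^ l) • (a : M)
        rw [hPsmul, Polynomial.aeval_X]
        exact hTlcoe a
      have hW'ne : ∃ w ∈ W', w ≠ 0 := by
        obtain ⟨a, haW, ha0⟩ := Submodule.exists_mem_ne_zero_of_ne_bot h
        exact ⟨(a : M), ⟨a, haW, rfl⟩, by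
          intro hh
          exact ha0 (Subtype.ext hh)⟩
      have hgensW' := hkey W' hW'le hW'T hW'ne
      rw [eq_top_iff]
      intro v _
      have hvM₀ : (v : M) ∈ M₀ := v.2
      have hM₀leW' : M₀ ≤ W' := by
        rw [hM₀def]
        apply Submodule.span_le.mpr
        rintro x ⟨j, rfl⟩
        exact hgensW' j
      obtain ⟨a, haW, hav⟩ := hM₀leW' hvM₀
      rwa [show a = v from Subtype.ext hav] at haW
  haveI : Algebra.FiniteType k (Polynomial R) :=
    Algebra.FiniteType.trans (inferInstance : Algebra.FiniteType k R)
      (inferInstance : Algebra.FiniteType R (Polynomial R))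
  have h1dim : ∀ v ∈ M₀, ∃ c : k, v = oB (algebraMap k R c) • m := by
    intro v hv
    obtain ⟨c, hc⟩ := simple_module_dim_one k (Polynomial R) ↥M₀ ⟨m, hmM₀⟩ ⟨v, hv⟩
      (fun h => hm0 (congrArg Subtype.val h))
    refine ⟨c, ?_⟩
    have hcoe := congrArg Subtype.val hc
    rw [hPsmul] at hcoe
    rw [IsScalarTower.algebraMap_apply k R (Polynomial R), Polynomial.algebraMap_eq,
      Polynomial.aeval_C, Module.algebraMap_end_apply] at hcoe
    rw [show ((((algebraMap k R) c) • (⟨m, hmM₀⟩ : ↥M₀) : ↥M₀) : M)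
          = ((algebraMap k R) c) • m from rfl, hsmul] at hcoe
    exact hcoe
  -- the candidate basis vectors
  set mS : Fin l → M := fun s => (YY ^ (s : ℕ)) • m with hmSdef
  have hmSne : ∀ s : Fin l, mS s ≠ 0 := by
    intro s hzero
    have h1 : (XX ^ (s : ℕ)) • mS s = oB (GWA.cc φ z (s : ℕ)) • m := by
      show (XX ^ (s : ℕ)) • (YY ^ (s : ℕ)) • m = _
      rw [← mul_smul, GWA.X_pow_mul_Y_pow]
    rw [hzero, smul_zero] at h1
    exact hcc (s : ℕ) (by have := s.2; omega) ((hann _).mpr h1.symm)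
  have hYalg : ∀ (c : k) (i : ℕ),
      YY ^ i * oB (algebraMap k R c) = oB (algebraMap k R c) * YY ^ i := by
    intro c i
    rw [GWA.Y_pow_mul_ofBase, AlgEquiv.commutes]
  have hswap : ∀ (c : k) (i : ℕ) (v : M),
      (YY ^ i) • (oB (algebraMap k R c) • v) = c • ((YY ^ i) • v) := by
    intro c i v
    rw [← mul_smul, hYalg, mul_smul, ← hcomp]
  have hoBc : ∀ (c : k) (r : R) (v : M), oB r • (c • v) = c • (oB r • v) := by
    intro c r v
    rw [hcomp, ← mul_smul, ← map_mul, mul_comm, map_mul, mul_smul, ← hcomp]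
  have hli : LinearIndependent k mS := by
    rw [Fintype.linearIndependent_iff]
    intro g hg s
    obtain ⟨u, hu1, hu2⟩ := hcrt (s : ℕ) (by have := s.2; omega)
    have hkill : ∀ t : Fin l, t ≠ s → oB u • mS t = 0 := by
      intro t hts
      show oB u • (YY ^ (t : ℕ)) • m = 0
      rw [← mul_smul, GWA.ofBase_mul_Y_pow, mul_smul,
        (hann _).mp ((hJ _ _).mp (hu2 (t : ℕ) (by have := t.2; omega)
          (fun h => hts (Fin.ext h)))), smul_zero]
    have hfix : oB u • mS s = mS s := by
      show oB u • (YY ^ (s : ℕ)) • m = (YY ^ (s : ℕ)) • m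
      rw [← mul_smul, GWA.ofBase_mul_Y_pow, mul_smul]
      have h1 : (φ.symm ^ (s : ℕ)) (1 - u) ∈ 𝔭 := hu1
      rw [map_sub, map_one] at h1
      have h2 := (hann _).mp h1
      rw [map_sub, map_one, sub_smul, one_smul, sub_eq_zero] at h2
      rw [← h2]
    have hsum : oB u • (∑ t, g t • mS t) = g s • mS s := by
      rw [Finset.smul_sum]
      rw [Finset.sum_eq_single s]
      · rw [hoBc, hfix]
      · intro t _ hts
        rw [hoBc, hkill t hts, smul_zero]
      · intro hs
        exact absurd (Finset.mem_univ s) hs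
    rw [hg, smul_zero] at hsum
    by_contra hgs
    refine hmSne s ?_
    rw [← one_smul k (mS s), ← inv_mul_cancel₀ hgs, mul_smul, ← hsum, smul_zero]
  set Q := Submodule.span k (Set.range mS) with hQdef
  have hgenQ : ∀ s : Fin l, mS s ∈ Q := fun s => Submodule.subset_span ⟨s, rfl⟩
  have hQR : ∀ (r : R), ∀ v ∈ Q, oB r • v ∈ Q := by
    intro r v hv
    induction hv using Submodule.span_induction with
    | mem x hx =>
        obtain ⟨s, rfl⟩ := hx
        show oB r • (YY ^ (s : ℕ)) • m ∈ Q
        rw [← mul_smul, GWA.ofBase_mul_Y_pow, mul_smul]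
        obtain ⟨c, hc⟩ := h1dim (oB ((φ.symm ^ (s : ℕ)) r) • m) (by
          rw [← hsmul]
          exact M₀.smul_mem _ hmM₀)
        rw [hc, hswap]
        exact Q.smul_mem _ (hgenQ s)
    | zero => rw [smul_zero]; exact Q.zero_mem
    | add x y _ _ hx hy => rw [smul_add]; exact Q.add_mem hx hy
    | smul c x _ hx =>
        rw [hcomp, ← mul_smul, ← map_mul, mul_comm, map_mul, mul_smul, ← hcomp]
        exact Q.smul_mem _ hx
  have hQtop : ∀ v : M, v ∈ Q := by
    intro v
    have hv := hspan m hm0 hxm v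
    induction hv using Submodule.span_induction with
    | mem x hx =>
        obtain ⟨i, rfl⟩ := hx
        show (YY ^ i) • m ∈ Q
        have hdecomp : (YY ^ i) • m = (YY ^ (i % l)) • gen (i / l) := by
          show _ = (YY ^ (i % l)) • (YY ^ (l * (i / l))) • m
          rw [← mul_smul, ← pow_add, Nat.mod_add_div]
        obtain ⟨c, hc⟩ := h1dim (gen (i / l)) (hgenM₀ _)
        rw [hdecomp, hc, hswap]
        exact Q.smul_mem _ (hgenQ ⟨i % l, Nat.mod_lt _ (by omega)⟩)
    | zero => exact Q.zero_mem
    | add x y _ _ hx hy => exact Q.add_mem hx hy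
    | smul r x _ hx =>
        rw [hsmul]
        exact hQR r x hx
  let bas : Module.Basis (Fin l) k M := Module.Basis.mk hli (by
    intro v _
    rw [hQdef] at hQtop
    exact hQtop v)
  rw [Module.finrank_eq_card_basis bas, Fintype.card_fin]

end Main

/-- Let `k` be an algebraically closed field and `R` a commutative finitely
generated `k`-algebra.  Let `z ∈ R` be a non-zero-divisor, `b ∈ R` nilpotent, `l ≥ 1`, and
`φ` a `k`-algebra automorphism of `R` such that `φ^l(r) − r ∈ bR` for all `r ∈ R` and such
that for each `1 ≤ i ≤ l−1` the elements `z` and `φ^i(z)` generate the unit ideal of `R`.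
Then every simple left `H(R, φ, z)`-module `M` on which `x` acts locally nilpotently has
`dim_k M = l` (where `M` is a `k`-vector space via `k → R → H(R, φ, z)`). -/
theorem statement19 (k : Type u) [Field k] [IsAlgClosed k]
    (R : Type u) [CommRing R] [Algebra k R] [Algebra.FiniteType k R]
    (z b : R) (hz : z ∈ nonZeroDivisors R) (hb : IsNilpotent b)
    (l : ℕ) (hl : 1 ≤ l) (φ : R ≃ₐ[k] R)
    (hφl : ∀ r : R, ∃ s : R, (φ ^ l) r - r = b * s)
    (hcop : ∀ i : ℕ, 1 ≤ i → i ≤ l - 1 →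
      Ideal.span {z, (φ ^ i) z} = ⊤)
    (M : Type u) [AddCommGroup M] [Module (GWA R (φ : R ≃+* R) z) M]
    [IsSimpleModule (GWA R (φ : R ≃+* R) z) M]
    (hM : ∀ m : M, ∃ n : ℕ, (GWA.X R (φ : R ≃+* R) z) ^ n • m = 0) :
    @Module.finrank k M _ _
      (Module.compHom M
        ((GWA.ofBase R (φ : R ≃+* R) z).comp (algebraMap k R))) = l := by
  letI : Module k M := Module.compHom M ((GWA.ofBase R (φ : R ≃+* R) z).comp (algebraMap k R))
  exact gwa_dim z b hb l hl φ hφl hcop M hM (fun c v => rfl)
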